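/- Let X be a set, x ∈ X, N_x ⊆ X \ {x} a set of neighbours, and w : N_x → [0,∞] a weight function. For each y ∈ N_x define the two-point ep-metric d^y on X by d^y(u,u) = 0, d^y(x,y) = d^y(y,x) = w(y), and d^y(u,v) = ∞ for all other pairs u ≠ v. Let D_x be the wedge ep-metric of the family (d^y)_{y ∈ N_x}: D_x(u,v) = inf over finite chains u = u₀, …, u_n = v and choices y₁, …, y_n ∈ N_x of Σ_j d^{y_j}(u_{j-1},u_j). Then: D_x(x,y) = w(y) for every y ∈ N_x; D_x(y,z) = w(y) + w(z) for all distinct y, z ∈ N_x; and D_x(u,v) = ∞ whenever u ≠ v and {u,v} is not contained in {x} ∪ N_x. -/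

import Mathlib

/-
A chain of two-point steps is a walk in the star with centre `x`, leaves `N` and edge
lengths `w`, so its cost is at least the star's path metric `D`, since `D` satisfies
`D(a,c) ≤ D(a,b) + d^i(b,c)` for every single step. Conversely every value of `D` is the
cost of a chain of at most two steps (through the centre). Hence `D_x = D`, whose values
are the ones claimed.
-/

open scoped ENNReal

/-- `d` is an extended pseudo-metric on `X`: it takes values in `[0,∞]`,
vanishes on the diagonal, is symmetric, and satisfies the triangle inequality. -/
structure IsEPMetric {X : Type*} (d : X → X → ℝ≥0∞) : Prop where
  refl : ∀ x, d x x = 0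
  symm : ∀ x y, d x y = d y x
  triangle : ∀ x y z, d x z ≤ d x y + d y z

/-- The set of costs `Σ_{j=1}^{n} d_{i_j}(x_{j-1}, x_j)` of finite chains
`x = x₀, x₁, …, x_n = y` together with choices of indices `i₁, …, i_n`. -/
def chainCosts {X I : Type*} (d : I → X → X → ℝ≥0∞) (x y : X) : Set ℝ≥0∞ :=
  { c | ∃ (n : ℕ) (p : Fin (n + 1) → X) (ix : Fin n → I),
      p 0 = x ∧ p (Fin.last n) = y ∧
      c = ∑ j : Fin n, d (ix j) (p j.castSucc) (p j.succ) }

/-- The wedge ep-metric `D` of a family of ep-metrics: the infimum of the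
costs of all finite chains from `x` to `y`. -/
noncomputable def wedgeDist {X I : Type*} (d : I → X → X → ℝ≥0∞) (x y : X) : ℝ≥0∞ :=
  sInf (chainCosts d x y)

open Classical in
/-- The two-point ep-metric `d^y` on `X` determined by a base point `x`, a
neighbour `y` and a weight `w y`: `d^y(x,y) = d^y(y,x) = w y`, the diagonal is
`0`, and all other distances are `∞`. -/
noncomputable def twoPointDist {X : Type*} (x : X) (w : X → ℝ≥0∞) (y : X) :
    X → X → ℝ≥0∞ := fun u v =>
  if u = v then 0
  else if (u = x ∧ v = y) ∨ (u = y ∧ v = x) then w y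
  else ⊤

/- The path metric of the star with centre `x`, leaves `N` and edge lengths `w`. -/
open Classical in
noncomputable def starDist {X : Type*} (x : X) (N : Set X) (w : X → ℝ≥0∞) :
    X → X → ℝ≥0∞ := fun u v =>
  if u = v then 0
  else if u = x ∧ v ∈ N then w v
  else if v = x ∧ u ∈ N then w u
  else if u ∈ N ∧ v ∈ N then w u + w v
  else ⊤

section wedgeDist

variable {X I : Type*} (d : I → X → X → ℝ≥0∞)

theorem wedgeDist_self (u : X) : wedgeDist d u u = 0 :=
  nonpos_iff_eq_zero.1 <| sInf_le ⟨0, fun _ => u, Fin.elim0, rfl, rfl, by simp⟩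

theorem wedgeDist_le (i : I) (u v : X) : wedgeDist d u v ≤ d i u v :=
  sInf_le ⟨1, ![u, v], ![i], rfl, rfl, by simp⟩

theorem wedgeDist_le_add (i j : I) (u v t : X) :
    wedgeDist d u t ≤ d i u v + d j v t :=
  sInf_le ⟨2, ![u, v, t], ![i, j], rfl, rfl, by simp [Fin.sum_univ_two]⟩

theorem le_wedgeDist_of_le_add {D : X → X → ℝ≥0∞} (hD : ∀ a, D a a = 0)
    (hstep : ∀ i a b c, D a c ≤ D a b + d i b c) (u v : X) :
    D u v ≤ wedgeDist d u v := by
  refine le_sInf ?_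
  rintro _ ⟨n, p, ix, rfl, rfl, rfl⟩
  induction n with
  | zero => simp [hD]
  | succ n ih =>
    calc D (p 0) (p (Fin.last (n + 1)))
        ≤ D (p 0) (p (Fin.last n).castSucc) +
            d (ix (Fin.last n)) (p (Fin.last n).castSucc) (p (Fin.last (n + 1))) :=
          hstep _ _ _ _
      _ ≤ _ := by
        rw [Fin.sum_univ_castSucc, Fin.succ_last]
        gcongr
        simpa only [Fin.succ_castSucc, Fin.castSucc_zero] using
          ih (fun j => p j.castSucc) (fun j => ix j.castSucc)

end wedgeDist

section starDist

variable {X : Type*} (x : X) (N : Set X) (w : X → ℝ≥0∞)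

theorem starDist_le_add_twoPointDist (i : N) (a b c : X) :
    starDist x N w a c ≤ starDist x N w a b + twoPointDist x w i b c := by
  obtain ⟨i, hi⟩ := i
  unfold starDist twoPointDist
  by_cases hbc : b = c
  · subst hbc; simp
  by_cases hedge : (b = x ∧ c = i) ∨ (b = i ∧ c = x)
  · rcases hedge with ⟨rfl, rfl⟩ | ⟨rfl, rfl⟩ <;>
      split_ifs <;> simp_all [add_comm, add_left_comm]
  · simp [hbc, hedge]

theorem wedgeDist_twoPointDist_le_starDist (u v : X) :
    wedgeDist (fun y : N => twoPointDist x w y) u v ≤ starDist x N w u v := by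
  unfold starDist
  split_ifs with huv hux_leaf hvx_leaf hleaves
  · rw [huv, wedgeDist_self]
  · obtain ⟨rfl, hv⟩ := hux_leaf
    exact (wedgeDist_le _ ⟨v, hv⟩ u v).trans_eq (by simp [twoPointDist, huv])
  · obtain ⟨rfl, hu⟩ := hvx_leaf
    exact (wedgeDist_le _ ⟨u, hu⟩ u v).trans_eq (by simp [twoPointDist, huv])
  · obtain ⟨hu, hv⟩ := hleaves
    have hux : u ≠ x := fun h => hux_leaf ⟨h, hv⟩
    have hvx : v ≠ x := fun h => hvx_leaf ⟨h, hu⟩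
    exact (wedgeDist_le_add _ ⟨u, hu⟩ ⟨v, hv⟩ u x v).trans_eq
      (by simp [twoPointDist, hux, hvx.symm])
  · exact le_top

theorem wedgeDist_twoPointDist_eq_starDist :
    wedgeDist (fun y : N => twoPointDist x w y) = starDist x N w := by
  ext u v
  exact le_antisymm (wedgeDist_twoPointDist_le_starDist x N w u v) <|
    le_wedgeDist_of_le_add _ (fun a => by simp [starDist])
      (starDist_le_add_twoPointDist x N w) u v

end starDist

/-- The ep-metric `D_x` on `X` obtained as the wedge of the two-point
ep-metrics `d^y`, `y ∈ N_x`:  `D_x(x,y) = w y` for `y ∈ N_x`,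
`D_x(y,z) = w y + w z` for distinct `y, z ∈ N_x`, and `D_x(u,v) = ∞` whenever
`u ≠ v` and `{u,v}` is not contained in `{x} ∪ N_x`. -/
theorem wedge_twoPointDist {X : Type*} (x : X) (N : Set X) (hxN : x ∉ N)
    (w : X → ℝ≥0∞) :
    (∀ y ∈ N, wedgeDist (fun y : N => twoPointDist x w y) x y = w y) ∧
    (∀ y ∈ N, ∀ z ∈ N, y ≠ z →
      wedgeDist (fun y : N => twoPointDist x w y) y z = w y + w z) ∧
    (∀ u v : X, u ≠ v → ¬(u ∈ insert x N ∧ v ∈ insert x N) →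
      wedgeDist (fun y : N => twoPointDist x w y) u v = ⊤) := by
  have hne : ∀ y ∈ N, y ≠ x := fun y hy h => hxN (h ▸ hy)
  simp only [wedgeDist_twoPointDist_eq_starDist]
  refine ⟨fun y hy => ?_, fun y hy z hz hyz => ?_, fun u v huv huvN => ?_⟩
  · simp [starDist, (hne y hy).symm, hy]
  · simp [starDist, hyz, hne y hy, hne z hz, hy, hz]
  · simp only [Set.mem_insert_iff, not_and_or, not_or] at huvN
    unfold starDist
    rcases huvN with ⟨hux, huN⟩ | ⟨hvx, hvN⟩ <;> simp_all
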